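/- arXiv:2001.07543 — 2 statements merged into one kernel-verified Lean document; each statement's English description precedes it below -/
import Mathlib

section
/- Dissipativity estimate for the two-dimensional operator with transmission conditions: for every (u₋, u₊) ∈ D(𝒜) and every λ > 0, one has ‖λ u − 𝒜 u‖ ≥ λ ‖u‖, where ‖·‖ denotes the supremum norm over both pieces, i.e. ‖v‖ = max( sup_{[r,1]×ℝ} |v₋|, sup_{[1,R]×ℝ} |v₊| ). -/
/-!
Maximum principle. By periodicity in `φ`, `|u|` attains its supremum `M` over both pieces at a
point `p`, and replacing `u` by `-u` we may assume `u p = M > 0`. The boundary conditions give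
the radial derivative at `p` the sign opposite to the one a maximum at an endpoint forces (at the
interface `ρ = 1` because `|u| ≤ M` on the other piece), so it vanishes; the one-sided
second-derivative test in `ρ` and the ordinary one in `φ` then give `𝒜 u p ≤ 0`, hence
`λ M ≤ λ u p - 𝒜 u p ≤ ‖λ u - 𝒜 u‖`.
-/

open Set Filter Topology

/-- Partial derivative in the radial variable (one-sided on `[a,b]`). -/
noncomputable def pdR (a b : ℝ) (u : ℝ → ℝ → ℝ) (ρ φ : ℝ) : ℝ :=
  derivWithin (fun s => u s φ) (Set.Icc a b) ρ

/-- Second partial derivative in the radial variable (one-sided on `[a,b]`). -/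
noncomputable def pdRR (a b : ℝ) (u : ℝ → ℝ → ℝ) (ρ φ : ℝ) : ℝ :=
  derivWithin (fun s => pdR a b u s φ) (Set.Icc a b) ρ

/-- Second partial derivative in the angular variable. -/
noncomputable def pdPP (u : ℝ → ℝ → ℝ) (ρ φ : ℝ) : ℝ :=
  deriv (deriv (u ρ)) φ

section OneVariable

variable {f : ℝ → ℝ} {a b x : ℝ}

lemma derivWithin_Icc_nonpos_of_isMaxOn (hf : DifferentiableWithinAt ℝ f (Icc a b) x)
    (hx : a ≤ x) (hxb : x < b) (hmax : IsMaxOn f (Icc a b) x) :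
    derivWithin f (Icc a b) x ≤ 0 := by
  have hcone : b - x ∈ posTangentConeAt (Icc a b) x :=
    sub_mem_posTangentConeAt_of_segment_subset <| by
      rw [segment_eq_Icc hxb.le]
      exact Icc_subset_Icc hx le_rfl
  have := hmax.localize.hasFDerivWithinAt_nonpos hf.hasDerivWithinAt.hasFDerivWithinAt hcone
  simp only [ContinuousLinearMap.toSpanSingleton_apply, smul_eq_mul] at this
  exact nonpos_of_mul_nonpos_right this (sub_pos.2 hxb)

lemma derivWithin_Icc_nonneg_of_isMaxOn (hf : DifferentiableWithinAt ℝ f (Icc a b) x)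
    (hax : a < x) (hx : x ≤ b) (hmax : IsMaxOn f (Icc a b) x) :
    0 ≤ derivWithin f (Icc a b) x := by
  have hcone : a - x ∈ posTangentConeAt (Icc a b) x :=
    sub_mem_posTangentConeAt_of_segment_subset <| by
      rw [segment_symm, segment_eq_Icc hax.le]
      exact Icc_subset_Icc le_rfl hx
  have := hmax.localize.hasFDerivWithinAt_nonpos hf.hasDerivWithinAt.hasFDerivWithinAt hcone
  simp only [ContinuousLinearMap.toSpanSingleton_apply, smul_eq_mul] at this
  exact nonneg_of_mul_nonpos_right this (sub_neg.2 hax)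

lemma derivWithin_Icc_eq_zero_of_isMaxOn (hf : DifferentiableWithinAt ℝ f (Icc a b) x)
    (hx : x ∈ Icc a b) (hmax : IsMaxOn f (Icc a b) x)
    (hleft : x = a → 0 ≤ derivWithin f (Icc a b) x)
    (hright : x = b → derivWithin f (Icc a b) x ≤ 0) :
    derivWithin f (Icc a b) x = 0 := by
  refine le_antisymm ?_ ?_
  · rcases hx.2.lt_or_eq with hxb | hxb
    · exact derivWithin_Icc_nonpos_of_isMaxOn hf hx.1 hxb hmax
    · exact hright hxb
  · rcases hx.1.lt_or_eq with hax | hax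
    · exact derivWithin_Icc_nonneg_of_isMaxOn hf hax hx.2 hmax
    · exact hleft hax.symm

lemma deriv_deriv_nonpos_of_isLocalMax (hmax : IsLocalMax f x) (hc : ContinuousAt f x) :
    deriv (deriv f) x ≤ 0 := by
  by_contra! hpos
  have hmin := isLocalMin_of_deriv_deriv_pos hpos hmax.deriv_eq_zero hc
  have hconst : f =ᶠ[𝓝 x] fun _ => f x :=
    (hmin.and hmax).mono fun y hy => le_antisymm hy.2 hy.1
  have : deriv (deriv f) x = 0 := by
    rw [hconst.deriv.deriv_eq]
    simp
  exact hpos.ne' this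

lemma derivWithin_derivWithin_Icc_nonpos_of_isMaxOn_of_lt (hf : ContDiffOn ℝ 2 f (Icc a b))
    (hx : a ≤ x) (hxb : x < b) (hmax : IsMaxOn f (Icc a b) x)
    (hd : derivWithin f (Icc a b) x = 0) :
    derivWithin (derivWithin f (Icc a b)) (Icc a b) x ≤ 0 := by
  set g := derivWithin f (Icc a b)
  by_contra! hpos
  -- `g` vanishes at `x` with positive slope, so `f` increases just to the right of `x`
  have hg : HasDerivWithinAt g (derivWithin g (Icc a b) x) (Ioi x) x := by
    have hg1 : ContDiffOn ℝ 1 g (Icc a b) :=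
      hf.derivWithin (uniqueDiffOn_Icc (hx.trans_lt hxb)) (by norm_num)
    exact (hg1.differentiableOn one_ne_zero x ⟨hx, hxb.le⟩).hasDerivWithinAt.mono_of_mem_nhdsWithin
      (Icc_mem_nhdsGT_of_mem ⟨hx, hxb⟩)
  have hg_pos : ∀ᶠ y in 𝓝[>] x, 0 < g y ∧ y < b := by
    filter_upwards [((hasDerivWithinAt_iff_tendsto_slope' (lt_irrefl x)).1 hg).eventually
      (eventually_gt_nhds hpos), self_mem_nhdsWithin, Ioo_mem_nhdsGT hxb] with y hy hxy hyb
    rw [slope_def_field, hd, sub_zero] at hy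
    exact ⟨(div_pos_iff_of_pos_right (sub_pos.2 hxy)).1 hy, hyb.2⟩
  obtain ⟨c, hxc, hc⟩ := mem_nhdsGT_iff_exists_Ioo_subset.1 hg_pos
  set y := (x + c) / 2
  have hxy : x < y := by simp only [y]; linarith [mem_Ioi.1 hxc]
  have hyc : y < c := by simp only [y]; linarith [mem_Ioi.1 hxc]
  have hyb : y < b := (hc ⟨hxy, hyc⟩).2
  have hmono : StrictMonoOn f (Icc x y) := by
    refine strictMonoOn_of_deriv_pos (convex_Icc x y)
      (hf.continuousOn.mono (Icc_subset_Icc hx hyb.le)) fun z hz => ?_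
    rw [interior_Icc] at hz
    obtain ⟨hgz, hzb⟩ := hc ⟨hz.1, hz.2.trans hyc⟩
    rwa [← derivWithin_of_mem_nhds (Icc_mem_nhds (hx.trans_lt hz.1) hzb)]
  exact (hmax ⟨hx.trans hxy.le, hyb.le⟩).not_gt <|
    hmono (left_mem_Icc.2 hxy.le) (right_mem_Icc.2 hxy.le) hxy

lemma derivWithin_comp_neg_Icc (f : ℝ → ℝ) (a b : ℝ) :
    derivWithin (fun t => f (-t)) (Icc (-b) (-a)) = fun y => -derivWithin f (Icc a b) (-y) := by
  ext y
  rw [derivWithin_comp_neg, neg_Icc, neg_neg, neg_neg]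

lemma derivWithin_derivWithin_Icc_nonpos_of_isMaxOn (hf : ContDiffOn ℝ 2 f (Icc a b))
    (hab : a < b) (hx : x ∈ Icc a b) (hmax : IsMaxOn f (Icc a b) x)
    (hd : derivWithin f (Icc a b) x = 0) :
    derivWithin (derivWithin f (Icc a b)) (Icc a b) x ≤ 0 := by
  rcases hx.2.lt_or_eq with hxb | rfl
  · exact derivWithin_derivWithin_Icc_nonpos_of_isMaxOn_of_lt hf hx.1 hxb hmax hd
  -- at the right endpoint, the reflection `t ↦ -t` turns it into a left endpoint
  have hrefl := derivWithin_derivWithin_Icc_nonpos_of_isMaxOn_of_lt (f := fun t => f (-t))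
    (hf.comp contDiff_neg.contDiffOn fun t ht => ⟨le_neg.1 ht.2, neg_le.1 ht.1⟩)
    le_rfl (neg_lt_neg hab) (fun t ht => by simpa using hmax ⟨le_neg.1 ht.2, neg_le.1 ht.1⟩)
    (by simp only [derivWithin_comp_neg_Icc, neg_neg, hd, neg_zero])
  rwa [derivWithin_comp_neg_Icc, derivWithin.fun_neg, derivWithin_comp_neg_Icc, neg_neg,
    neg_neg] at hrefl

end OneVariable

section ProductSlices

variable {s : Set ℝ} {Φ : ℝ × ℝ → ℝ} {u : ℝ → ℝ → ℝ} {ρ φ : ℝ} {m n : WithTop ℕ∞}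

lemma derivWithin_comp_prodMk_left (hΦ : DifferentiableWithinAt ℝ Φ (s ×ˢ univ) (ρ, φ))
    (hs : UniqueDiffWithinAt ℝ s ρ) :
    derivWithin (fun t => Φ (t, φ)) s ρ = fderivWithin ℝ Φ (s ×ˢ univ) (ρ, φ) (1, 0) :=
  (hΦ.hasFDerivWithinAt.comp_hasDerivWithinAt ρ
    ((hasDerivAt_id ρ).prodMk (hasDerivAt_const ρ φ)).hasDerivWithinAt
    fun _ ht => mk_mem_prod ht (mem_univ φ)).derivWithin hs

lemma deriv_comp_prodMk_right (hΦ : DifferentiableWithinAt ℝ Φ (s ×ˢ univ) (ρ, φ))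
    (hρ : ρ ∈ s) :
    deriv (fun t => Φ (ρ, t)) φ = fderivWithin ℝ Φ (s ×ˢ univ) (ρ, φ) (0, 1) := by
  have := hΦ.hasFDerivWithinAt.comp_hasDerivWithinAt φ
    ((hasDerivAt_const φ ρ).prodMk (hasDerivAt_id φ)).hasDerivWithinAt (s := univ)
    fun t _ => mk_mem_prod hρ (mem_univ t)
  exact (hasDerivWithinAt_univ.1 this).deriv

lemma ContDiffOn.deriv_snd (hs : UniqueDiffOn ℝ s)
    (hu : ContDiffOn ℝ n (fun p : ℝ × ℝ => u p.1 p.2) (s ×ˢ univ)) (hmn : m + 1 ≤ n) :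
    ContDiffOn ℝ m (fun p : ℝ × ℝ => deriv (u p.1) p.2) (s ×ˢ univ) := by
  refine ((hu.fderivWithin (hs.prod uniqueDiffOn_univ) hmn).clm_apply
    (contDiffOn_const (c := ((0 : ℝ), (1 : ℝ))))).congr fun p hp => ?_
  exact deriv_comp_prodMk_right
    (hu.differentiableOn (zero_lt_one.trans_le (le_add_self.trans hmn)).ne' p hp) hp.1

lemma ContDiffOn.pdR {a b : ℝ} (hu : ContDiffOn ℝ n (fun p : ℝ × ℝ => u p.1 p.2) (Icc a b ×ˢ univ))
    (hab : a < b) (hmn : m + 1 ≤ n) :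
    ContDiffOn ℝ m (fun p : ℝ × ℝ => pdR a b u p.1 p.2) (Icc a b ×ˢ univ) := by
  have hS : UniqueDiffOn ℝ (Icc a b ×ˢ (univ : Set ℝ)) :=
    (uniqueDiffOn_Icc hab).prod uniqueDiffOn_univ
  refine ((hu.fderivWithin hS hmn).clm_apply
    (contDiffOn_const (c := ((1 : ℝ), (0 : ℝ))))).congr fun p hp => ?_
  exact derivWithin_comp_prodMk_left
    (hu.differentiableOn (zero_lt_one.trans_le (le_add_self.trans hmn)).ne' p hp)
    (uniqueDiffOn_Icc hab _ hp.1)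

end ProductSlices

lemma image_prod_univ_eq_image_prod_Icc_of_periodic {α β : Type*} {F : α × ℝ → β} {T : ℝ}
    (hT : 0 < T) (hF : ∀ x φ, F (x, φ + T) = F (x, φ)) (K : Set α) :
    F '' (K ×ˢ univ) = F '' (K ×ˢ Icc 0 T) := by
  refine (image_mono (prod_mono le_rfl (subset_univ _))).antisymm' ?_
  rintro _ ⟨⟨x, φ⟩, ⟨hx, -⟩, rfl⟩
  obtain ⟨ψ, hψ, hψφ⟩ := Function.Periodic.exists_mem_Ico₀ (f := fun φ => F (x, φ)) (hF x) hT φ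
  exact ⟨(x, ψ), ⟨hx, Ico_subset_Icc_self hψ⟩, hψφ.symm⟩

lemma IsCompact.image_prod_univ_of_periodic {α β : Type*} [TopologicalSpace α]
    [TopologicalSpace β] {K : Set α} {F : α × ℝ → β} {T : ℝ} (hK : IsCompact K) (hT : 0 < T)
    (hF : ∀ x φ, F (x, φ + T) = F (x, φ)) (hc : ContinuousOn F (K ×ˢ univ)) :
    IsCompact (F '' (K ×ˢ univ)) := by
  rw [image_prod_univ_eq_image_prod_Icc_of_periodic hT hF]
  exact (hK.prod isCompact_Icc).image_of_continuousOn (hc.mono (prod_mono le_rfl (subset_univ _)))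

lemma mul_mul_sub_nonneg_of_abs_le {x y c : ℝ} (hc : 0 ≤ c) (h : |y| ≤ |x|) :
    0 ≤ x * (c * (x - y)) := by
  have hxy : x * y ≤ x * x :=
    calc x * y ≤ |x| * |y| := (le_abs_self _).trans (abs_mul x y).le
      _ ≤ |x| * |x| := by gcongr
      _ = x * x := abs_mul_abs_self x
  linarith [mul_nonneg hc (sub_nonneg.2 hxy)]

noncomputable def polarLaplacian (a b : ℝ) (u : ℝ → ℝ → ℝ) (ρ φ : ℝ) : ℝ :=
  pdRR a b u ρ φ + ρ⁻¹ * pdR a b u ρ φ + (ρ ^ 2)⁻¹ * pdPP u ρ φ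

section Strip

variable {a b ρ φ : ℝ} {u : ℝ → ℝ → ℝ}

lemma pdR_neg : pdR a b (fun ρ φ => -u ρ φ) = fun ρ φ => -pdR a b u ρ φ := by
  ext ρ φ
  exact derivWithin.fun_neg

lemma polarLaplacian_neg (ρ φ : ℝ) :
    polarLaplacian a b (fun ρ φ => -u ρ φ) ρ φ = -polarLaplacian a b u ρ φ := by
  simp only [polarLaplacian, pdRR, pdR_neg, pdPP, derivWithin.fun_neg, deriv.fun_neg']
  ring

lemma polarLaplacian_comp_add_const (T ρ φ : ℝ) :
    polarLaplacian a b (fun ρ φ => u ρ (φ + T)) ρ φ = polarLaplacian a b u ρ (φ + T) := by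
  have hshift : deriv (fun φ => u ρ (φ + T)) = fun φ => deriv (u ρ) (φ + T) :=
    funext fun φ => deriv_comp_add_const (u ρ) T φ
  simp only [polarLaplacian, pdRR, pdR, pdPP, hshift, deriv_comp_add_const]

lemma continuousOn_polarLaplacian (ha : 0 < a) (hab : a < b)
    (hu : ContDiffOn ℝ 2 (fun p : ℝ × ℝ => u p.1 p.2) (Icc a b ×ˢ univ)) :
    ContinuousOn (fun p : ℝ × ℝ => polarLaplacian a b u p.1 p.2) (Icc a b ×ˢ univ) := by
  have hR := (hu.pdR hab (m := 1) (by norm_num)).continuousOn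
  have hRR := ((hu.pdR hab (m := 1) (by norm_num)).pdR (u := fun ρ φ => pdR a b u ρ φ) hab
    (m := 0) (by norm_num)).continuousOn
  have hPP := ((hu.deriv_snd (uniqueDiffOn_Icc hab) (m := 1) (by norm_num)).deriv_snd
    (u := fun ρ φ => deriv (u ρ) φ) (uniqueDiffOn_Icc hab) (m := 0) (by norm_num)).continuousOn
  have hρ : ∀ p ∈ Icc a b ×ˢ (univ : Set ℝ), p.1 ≠ 0 := fun p hp => (ha.trans_le hp.1.1).ne'
  exact (hRR.add ((continuousOn_fst.inv₀ hρ).mul hR)).add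
    (((continuousOn_fst.pow 2).inv₀ fun p hp => pow_ne_zero 2 (hρ p hp)).mul hPP)

lemma polarLaplacian_nonpos_of_isMaxOn (hab : a < b)
    (hu : ContDiffOn ℝ 2 (fun p : ℝ × ℝ => u p.1 p.2) (Icc a b ×ˢ univ)) (hρ : ρ ∈ Icc a b)
    (hmax : IsMaxOn (fun p : ℝ × ℝ => u p.1 p.2) (Icc a b ×ˢ univ) (ρ, φ))
    (hleft : ρ = a → 0 ≤ pdR a b u ρ φ) (hright : ρ = b → pdR a b u ρ φ ≤ 0) :
    polarLaplacian a b u ρ φ ≤ 0 := by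
  have hrad : ContDiffOn ℝ 2 (fun t => u t φ) (Icc a b) :=
    hu.comp (contDiff_id.prodMk contDiff_const).contDiffOn fun t ht => mk_mem_prod ht (mem_univ φ)
  have hang : ContDiff ℝ 2 (u ρ) := contDiffOn_univ.1 <|
    hu.comp (contDiff_const.prodMk contDiff_id).contDiffOn fun t _ => mk_mem_prod hρ (mem_univ t)
  have hradmax : IsMaxOn (fun t => u t φ) (Icc a b) ρ :=
    fun t ht => hmax (mk_mem_prod ht (mem_univ φ))
  have hangmax : IsLocalMax (u ρ) φ :=
    IsMaxOn.isLocalMax (s := univ) (fun t _ => hmax (mk_mem_prod hρ (mem_univ t))) univ_mem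
  have hR : pdR a b u ρ φ = 0 := derivWithin_Icc_eq_zero_of_isMaxOn
    (hrad.differentiableOn two_ne_zero ρ hρ) hρ hradmax hleft hright
  have hRR : pdRR a b u ρ φ ≤ 0 :=
    derivWithin_derivWithin_Icc_nonpos_of_isMaxOn hrad hab hρ hradmax hR
  have hPP : pdPP u ρ φ ≤ 0 :=
    deriv_deriv_nonpos_of_isLocalMax hangmax hang.continuous.continuousAt
  have : (ρ ^ 2)⁻¹ * pdPP u ρ φ ≤ 0 := mul_nonpos_of_nonneg_of_nonpos (by positivity) hPP
  rw [polarLaplacian, hR, mul_zero]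
  linarith

lemma mul_abs_le_abs_sub_polarLaplacian_of_pos (lam : ℝ) {c : ℝ} (hc : 0 ≤ c) (hab : a < b)
    (hu : ContDiffOn ℝ 2 (fun p : ℝ × ℝ => u p.1 p.2) (Icc a b ×ˢ univ)) (hρ : ρ ∈ Icc a b)
    (hmax : IsMaxOn (fun p : ℝ × ℝ => |u p.1 p.2|) (Icc a b ×ˢ univ) (ρ, φ))
    (hpos : 0 < u ρ φ)
    (hleft : ρ = a → 0 ≤ u ρ φ * pdR a b u ρ φ) (hright : ρ = b → u ρ φ * pdR a b u ρ φ ≤ 0) :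
    lam * |u ρ φ| ≤ |lam * u ρ φ - c * polarLaplacian a b u ρ φ| := by
  have hΔ := polarLaplacian_nonpos_of_isMaxOn hab hu hρ
    (fun p hp => (le_abs_self _).trans ((hmax hp).trans (abs_of_pos hpos).le))
    (fun h => nonneg_of_mul_nonneg_right (hleft h) hpos)
    (fun h => nonpos_of_mul_nonpos_right (hright h) hpos)
  rw [abs_of_pos hpos]
  exact le_abs.2 <| Or.inl <| by linarith [mul_nonpos_of_nonneg_of_nonpos hc hΔ]

/-- The boundary hypotheses (outward radial flux of sign opposite to `u`) hold at a maximum point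
of `|u|` under both the Neumann and the transmission conditions. -/
lemma mul_abs_le_abs_sub_polarLaplacian (lam : ℝ) {c : ℝ} (hc : 0 ≤ c) (hab : a < b)
    (hu : ContDiffOn ℝ 2 (fun p : ℝ × ℝ => u p.1 p.2) (Icc a b ×ˢ univ)) (hρ : ρ ∈ Icc a b)
    (hmax : IsMaxOn (fun p : ℝ × ℝ => |u p.1 p.2|) (Icc a b ×ˢ univ) (ρ, φ))
    (hleft : ρ = a → 0 ≤ u ρ φ * pdR a b u ρ φ) (hright : ρ = b → u ρ φ * pdR a b u ρ φ ≤ 0) :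
    lam * |u ρ φ| ≤ |lam * u ρ φ - c * polarLaplacian a b u ρ φ| := by
  rcases lt_trichotomy (u ρ φ) 0 with hneg | hzero | hpos
  · have := mul_abs_le_abs_sub_polarLaplacian_of_pos lam hc hab hu.neg (u := fun ρ φ => -u ρ φ) hρ
      (by simpa only [abs_neg] using hmax) (neg_pos.2 hneg)
      (by simpa only [pdR_neg, neg_mul_neg] using hleft)
      (by simpa only [pdR_neg, neg_mul_neg] using hright)
    beta_reduce at this
    rwa [polarLaplacian_neg, abs_neg, mul_neg, mul_neg, sub_neg_eq_add, neg_add_eq_sub,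
      abs_sub_comm] at this
  · rw [hzero, abs_zero, mul_zero]
    exact abs_nonneg _
  · exact mul_abs_le_abs_sub_polarLaplacian_of_pos lam hc hab hu hρ hmax hpos hleft hright

lemma exists_isMaxOn_abs_of_periodic (hab : a ≤ b)
    (hu : ContinuousOn (fun p : ℝ × ℝ => u p.1 p.2) (Icc a b ×ˢ univ))
    (hper : ∀ ρ φ, u ρ (φ + 2 * Real.pi) = u ρ φ) :
    ∃ p ∈ Icc a b ×ˢ (univ : Set ℝ),
      IsMaxOn (fun q : ℝ × ℝ => |u q.1 q.2|) (Icc a b ×ˢ univ) p ∧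
      sSup ((fun q : ℝ × ℝ => |u q.1 q.2|) '' (Icc a b ×ˢ univ)) = |u p.1 p.2| := by
  have hK := isCompact_Icc.image_prod_univ_of_periodic (F := fun q : ℝ × ℝ => |u q.1 q.2|)
    Real.two_pi_pos (fun ρ φ => by simp only [hper]) hu.abs
  obtain ⟨p, hp, hsup⟩ := hK.sSup_mem (((nonempty_Icc.2 hab).prod univ_nonempty).image _)
  exact ⟨p, hp, fun q hq => hsup ▸ le_csSup hK.bddAbove (mem_image_of_mem _ hq), hsup.symm⟩

lemma bddAbove_image_abs_sub_polarLaplacian (lam c : ℝ) (ha : 0 < a) (hab : a < b)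
    (hu : ContDiffOn ℝ 2 (fun p : ℝ × ℝ => u p.1 p.2) (Icc a b ×ˢ univ))
    (hper : ∀ ρ φ, u ρ (φ + 2 * Real.pi) = u ρ φ) :
    BddAbove ((fun p : ℝ × ℝ => |lam * u p.1 p.2 - c * polarLaplacian a b u p.1 p.2|) ''
      (Icc a b ×ˢ univ)) := by
  refine (isCompact_Icc.image_prod_univ_of_periodic Real.two_pi_pos (fun ρ φ => ?_)
    ((continuousOn_const.mul hu.continuousOn).sub
      (continuousOn_const.mul (continuousOn_polarLaplacian ha hab hu))).abs).bddAbove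
  simp only [Pi.sub_apply, Pi.mul_apply, ← polarLaplacian_comp_add_const, hper]

lemma mul_abs_le_sSup_abs_sub_polarLaplacian (lam : ℝ) {c : ℝ} (hc : 0 ≤ c) (ha : 0 < a)
    (hab : a < b) (hu : ContDiffOn ℝ 2 (fun p : ℝ × ℝ => u p.1 p.2) (Icc a b ×ˢ univ))
    (hper : ∀ ρ φ, u ρ (φ + 2 * Real.pi) = u ρ φ) (hρ : ρ ∈ Icc a b)
    (hmax : IsMaxOn (fun p : ℝ × ℝ => |u p.1 p.2|) (Icc a b ×ˢ univ) (ρ, φ))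
    (hleft : ρ = a → 0 ≤ u ρ φ * pdR a b u ρ φ) (hright : ρ = b → u ρ φ * pdR a b u ρ φ ≤ 0) :
    lam * |u ρ φ| ≤ sSup ((fun p : ℝ × ℝ =>
      |lam * u p.1 p.2 - c * polarLaplacian a b u p.1 p.2|) '' (Icc a b ×ˢ univ)) :=
  (mul_abs_le_abs_sub_polarLaplacian lam hc hab hu hρ hmax hleft hright).trans <|
    le_csSup (bddAbove_image_abs_sub_polarLaplacian lam c ha hab hu hper)
      (mem_image_of_mem _ (mk_mem_prod hρ (mem_univ φ)))

end Strip

theorem dissipativity_transmission_2D_general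
    (r R κ α β lam : ℝ) (hr : 0 < r) (hr1 : r < 1) (hR : 1 < R) (hκ : 0 < κ)
    (hα : 0 ≤ α) (hβ : 0 ≤ β)
    (um up : ℝ → ℝ → ℝ)
    (hum : ContDiffOn ℝ 2 (fun p : ℝ × ℝ => um p.1 p.2) (Icc r 1 ×ˢ (univ : Set ℝ)))
    (hup : ContDiffOn ℝ 2 (fun p : ℝ × ℝ => up p.1 p.2) (Icc 1 R ×ˢ (univ : Set ℝ)))
    (humper : ∀ ρ φ, um ρ (φ + 2 * Real.pi) = um ρ φ)
    (hupper : ∀ ρ φ, up ρ (φ + 2 * Real.pi) = up ρ φ)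
    (hbcm : ∀ φ : ℝ, pdR r 1 um r φ = 0)
    (hbcp : ∀ φ : ℝ, pdR 1 R up R φ = 0)
    (htrp : ∀ φ : ℝ, pdR 1 R up 1 φ = α * (up 1 φ - um 1 φ))
    (htrm : ∀ φ : ℝ, pdR r 1 um 1 φ = β * (up 1 φ - um 1 φ)) :
    lam * max
        (sSup ((fun p : ℝ × ℝ => |um p.1 p.2|) '' (Icc r 1 ×ˢ (univ : Set ℝ))))
        (sSup ((fun p : ℝ × ℝ => |up p.1 p.2|) '' (Icc 1 R ×ˢ (univ : Set ℝ))))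
      ≤ max
        (sSup ((fun p : ℝ × ℝ =>
            |lam * um p.1 p.2 -
              κ * (pdRR r 1 um p.1 p.2 + (p.1)⁻¹ * pdR r 1 um p.1 p.2
                    + (p.1 ^ 2)⁻¹ * pdPP um p.1 p.2)|)
          '' (Icc r 1 ×ˢ (univ : Set ℝ))))
        (sSup ((fun p : ℝ × ℝ =>
            |lam * up p.1 p.2 -
              (pdRR 1 R up p.1 p.2 + (p.1)⁻¹ * pdR 1 R up p.1 p.2
                + (p.1 ^ 2)⁻¹ * pdPP up p.1 p.2)|)
          '' (Icc 1 R ×ˢ (univ : Set ℝ)))) := by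
  obtain ⟨⟨ρm, φm⟩, hpm, hmaxm, hsupm⟩ :=
    exists_isMaxOn_abs_of_periodic hr1.le hum.continuousOn humper
  obtain ⟨⟨ρp, φp⟩, hpp, hmaxp, hsupp⟩ :=
    exists_isMaxOn_abs_of_periodic hR.le hup.continuousOn hupper
  rw [hsupm, hsupp]
  rcases le_total |up ρp φp| |um ρm φm| with hle | hle
  · rw [max_eq_left hle]
    refine le_max_of_le_left (mul_abs_le_sSup_abs_sub_polarLaplacian lam hκ.le hr hr1 hum humper
      hpm.1 hmaxm (fun h => by rw [h, hbcm, mul_zero]) fun h => ?_)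
    subst h
    have hup_le := (hmaxp (mk_mem_prod (left_mem_Icc.2 hR.le) (mem_univ φm))).trans hle
    rw [htrm]
    linarith [mul_mul_sub_nonneg_of_abs_le hβ hup_le]
  · rw [max_eq_right hle]
    have key := mul_abs_le_sSup_abs_sub_polarLaplacian lam zero_le_one one_pos hR hup hupper
      hpp.1 hmaxp (fun h => ?_) fun h => by rw [h, hbcp, mul_zero]
    · exact le_max_of_le_right (by simpa only [polarLaplacian, one_mul] using key)
    subst h
    have hum_le := (hmaxm (mk_mem_prod (right_mem_Icc.2 hr1.le) (mem_univ φp))).trans hle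
    rw [htrp]
    exact mul_mul_sub_nonneg_of_abs_le hα hum_le

/-- Dissipativity estimate `‖λu − 𝒜u‖ ≥ λ‖u‖` for the two-dimensional operator
with transmission conditions; the norm is the supremum norm over both pieces. -/
theorem dissipativity_transmission_2D
    (r R κ α β lam : ℝ) (hr : 0 < r) (hr1 : r < 1) (hR : 1 < R) (hκ : 0 < κ)
    (hα : 0 ≤ α) (hβ : 0 ≤ β) (hlam : 0 < lam)
    (um up : ℝ → ℝ → ℝ)
    (hum : ContDiffOn ℝ 2 (fun p : ℝ × ℝ => um p.1 p.2) (Icc r 1 ×ˢ (univ : Set ℝ)))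
    (hup : ContDiffOn ℝ 2 (fun p : ℝ × ℝ => up p.1 p.2) (Icc 1 R ×ˢ (univ : Set ℝ)))
    (humper : ∀ ρ φ, um ρ (φ + 2 * Real.pi) = um ρ φ)
    (hupper : ∀ ρ φ, up ρ (φ + 2 * Real.pi) = up ρ φ)
    (hbcm : ∀ φ : ℝ, pdR r 1 um r φ = 0)
    (hbcp : ∀ φ : ℝ, pdR 1 R up R φ = 0)
    (htrp : ∀ φ : ℝ, pdR 1 R up 1 φ = α * (up 1 φ - um 1 φ))
    (htrm : ∀ φ : ℝ, pdR r 1 um 1 φ = β * (up 1 φ - um 1 φ)) :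
    lam * max
        (sSup ((fun p : ℝ × ℝ => |um p.1 p.2|) '' (Icc r 1 ×ˢ (univ : Set ℝ))))
        (sSup ((fun p : ℝ × ℝ => |up p.1 p.2|) '' (Icc 1 R ×ˢ (univ : Set ℝ))))
      ≤ max
        (sSup ((fun p : ℝ × ℝ =>
            |lam * um p.1 p.2 -
              κ * (pdRR r 1 um p.1 p.2 + (p.1)⁻¹ * pdR r 1 um p.1 p.2
                    + (p.1 ^ 2)⁻¹ * pdPP um p.1 p.2)|)
          '' (Icc r 1 ×ˢ (univ : Set ℝ))))
        (sSup ((fun p : ℝ × ℝ =>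
            |lam * up p.1 p.2 -
              (pdRR 1 R up p.1 p.2 + (p.1)⁻¹ * pdR 1 R up p.1 p.2
                + (p.1 ^ 2)⁻¹ * pdPP up p.1 p.2)|)
          '' (Icc 1 R ×ˢ (univ : Set ℝ)))) :=
  dissipativity_transmission_2D_general r R κ α β lam hr hr1 hR hκ hα hβ um up hum hup humper hupper
    hbcm hbcp htrp htrm
end

section
/- Range condition for the operator on an interval with an isolated external state: for every a < 0, κ > 0, β ≥ 0, λ > 0, every continuous g : [a,0] → ℝ, and every c ∈ ℝ, there exists a twice continuously differentiable function f : [a,0] → ℝ (one-sided derivatives at the endpoints) such that λ f(x) − κ f''(x) = g(x) for all x ∈ [a,0], f'(a) = 0, and f'(0) = β ( c/λ − f(0) ). -/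
/-!
With `μ = √(λ/κ)` the equation reads `f'' = μ² f - g/κ`. Variation of constants gives the
solution `x ↦ -(κμ)⁻¹ ∫ₐˣ sinh (μ (x - t)) g t dt` with `f a = f' a = 0`, and adding
`A cosh (μ (x - a))` keeps `f' a = 0`. The Robin condition at `0` is affine in `A` with slope
`μ sinh (-μ a) + β cosh (-μ a) > 0`, so it determines `A`.
-/

open Set

/-- One-sided first derivative on the interval `[a,b]`. -/
noncomputable def dIcc (a b : ℝ) (f : ℝ → ℝ) : ℝ → ℝ :=
  derivWithin f (Set.Icc a b)

/-- One-sided second derivative on the interval `[a,b]`. -/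
noncomputable def d2Icc (a b : ℝ) (f : ℝ → ℝ) : ℝ → ℝ :=
  derivWithin (derivWithin f (Set.Icc a b)) (Set.Icc a b)

open Real

section IntervalDerivatives

variable {a b : ℝ} {f f' f'' : ℝ → ℝ}

theorem dIcc_eq_of_hasDerivAt (hab : a < b) (hf : ∀ x, HasDerivAt f (f' x) x) {x : ℝ}
    (hx : x ∈ Icc a b) : dIcc a b f x = f' x :=
  (hf x).hasDerivWithinAt.derivWithin (uniqueDiffOn_Icc hab x hx)

theorem d2Icc_eq_of_hasDerivAt (hab : a < b) (hf : ∀ x, HasDerivAt f (f' x) x)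
    (hf' : ∀ x, HasDerivAt f' (f'' x) x) {x : ℝ} (hx : x ∈ Icc a b) :
    d2Icc a b f x = f'' x := by
  have hdf : HasDerivWithinAt (dIcc a b f) (f'' x) (Icc a b) x :=
    (hf' x).hasDerivWithinAt.congr (fun y hy => dIcc_eq_of_hasDerivAt hab hf hy)
      (dIcc_eq_of_hasDerivAt hab hf hx)
  exact hdf.derivWithin (uniqueDiffOn_Icc hab x hx)

theorem contDiff_two_of_hasDerivAt (hf : ∀ x, HasDerivAt f (f' x) x)
    (hf' : ∀ x, HasDerivAt f' (f'' x) x) (hf'' : Continuous f'') : ContDiff ℝ 2 f := by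
  rw [show (2 : WithTop ℕ∞) = 1 + 1 from rfl, contDiff_succ_iff_deriv,
    funext fun x => (hf x).deriv, contDiff_one_iff_deriv, funext fun x => (hf' x).deriv]
  exact ⟨fun x => (hf x).differentiableAt, by simp, fun x => (hf' x).differentiableAt, hf''⟩

end IntervalDerivatives

section HyperbolicConvolution

variable (μ a : ℝ) (G : ℝ → ℝ)

/-- `∫ t in a..x, sinh (μ * (x - t)) * G t`, expanded by the addition formula so that `x`
leaves the integrands. -/
noncomputable def sinhConv (x : ℝ) : ℝ :=
  sinh (μ * x) * (∫ t in a..x, cosh (μ * t) * G t) -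
    cosh (μ * x) * ∫ t in a..x, sinh (μ * t) * G t

/-- `∫ t in a..x, cosh (μ * (x - t)) * G t`, expanded likewise. -/
noncomputable def coshConv (x : ℝ) : ℝ :=
  cosh (μ * x) * (∫ t in a..x, cosh (μ * t) * G t) -
    sinh (μ * x) * ∫ t in a..x, sinh (μ * t) * G t

@[simp] theorem coshConv_self : coshConv μ a G a = 0 := by simp [coshConv]

variable {G}

theorem hasDerivAt_sinhConv (hG : Continuous G) (x : ℝ) :
    HasDerivAt (sinhConv μ a G) (μ * coshConv μ a G x) x := by
  have hc : HasDerivAt (fun u => ∫ t in a..u, cosh (μ * t) * G t) (cosh (μ * x) * G x) x :=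
    (Continuous.integral_hasStrictDerivAt (by fun_prop) a x).hasDerivAt
  have hs : HasDerivAt (fun u => ∫ t in a..u, sinh (μ * t) * G t) (sinh (μ * x) * G x) x :=
    (Continuous.integral_hasStrictDerivAt (by fun_prop) a x).hasDerivAt
  have hμx : HasDerivAt (fun y => μ * y) μ x := by simpa using (hasDerivAt_id x).const_mul μ
  refine ((hμx.sinh.mul hc).sub (hμx.cosh.mul hs)).congr_deriv ?_
  rw [coshConv]
  ring

theorem hasDerivAt_coshConv (hG : Continuous G) (x : ℝ) :
    HasDerivAt (coshConv μ a G) (μ * sinhConv μ a G x + G x) x := by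
  have hc : HasDerivAt (fun u => ∫ t in a..u, cosh (μ * t) * G t) (cosh (μ * x) * G x) x :=
    (Continuous.integral_hasStrictDerivAt (by fun_prop) a x).hasDerivAt
  have hs : HasDerivAt (fun u => ∫ t in a..u, sinh (μ * t) * G t) (sinh (μ * x) * G x) x :=
    (Continuous.integral_hasStrictDerivAt (by fun_prop) a x).hasDerivAt
  have hμx : HasDerivAt (fun y => μ * y) μ x := by simpa using (hasDerivAt_id x).const_mul μ
  refine ((hμx.cosh.mul hc).sub (hμx.sinh.mul hs)).congr_deriv ?_
  rw [sinhConv]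
  linear_combination G x * cosh_sq_sub_sinh_sq (μ * x)

end HyperbolicConvolution

section NeumannSolution

variable (κ μ a A : ℝ) (G : ℝ → ℝ)

/-- The solution of `κ μ² f - κ f'' = G` with `f a = A` and `f' a = 0`. -/
noncomputable def neumannSol (x : ℝ) : ℝ :=
  A * cosh (μ * (x - a)) - sinhConv μ a G x / (κ * μ)

noncomputable def neumannSolDeriv (x : ℝ) : ℝ :=
  A * μ * sinh (μ * (x - a)) - coshConv μ a G x / κ

@[simp] theorem neumannSolDeriv_left : neumannSolDeriv κ μ a A G a = 0 := by
  simp [neumannSolDeriv]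

variable {μ G}

theorem hasDerivAt_neumannSol (hμ : μ ≠ 0) (hG : Continuous G) (x : ℝ) :
    HasDerivAt (neumannSol κ μ a A G) (neumannSolDeriv κ μ a A G x) x := by
  have hμx : HasDerivAt (fun y => μ * (y - a)) μ x := by
    simpa using ((hasDerivAt_id x).sub_const a).const_mul μ
  refine ((hμx.cosh.const_mul A).sub
    ((hasDerivAt_sinhConv μ a hG x).div_const _)).congr_deriv ?_
  rw [neumannSolDeriv]
  field_simp

theorem hasDerivAt_neumannSolDeriv (hμ : μ ≠ 0) (hG : Continuous G) (x : ℝ) :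
    HasDerivAt (neumannSolDeriv κ μ a A G) (μ ^ 2 * neumannSol κ μ a A G x - G x / κ) x := by
  have hμx : HasDerivAt (fun y => μ * (y - a)) μ x := by
    simpa using ((hasDerivAt_id x).sub_const a).const_mul μ
  refine ((hμx.sinh.const_mul (A * μ)).sub
    ((hasDerivAt_coshConv μ a hG x).div_const _)).congr_deriv ?_
  rw [neumannSol]
  field_simp
  ring

theorem exists_neumannSol_robin (hμ : 0 < μ) {b : ℝ} (hab : a < b) {β : ℝ}
    (hβ : 0 ≤ β) (r : ℝ) :
    ∃ A, neumannSolDeriv κ μ a A G b = β * (r - neumannSol κ μ a A G b) := by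
  have hslope : 0 < μ * sinh (μ * (b - a)) + β * cosh (μ * (b - a)) := by
    have := sinh_pos_iff.2 (mul_pos hμ (sub_pos.2 hab))
    have := cosh_pos (μ * (b - a))
    positivity
  refine ⟨(β * (r + sinhConv μ a G b / (κ * μ)) + coshConv μ a G b / κ) /
    (μ * sinh (μ * (b - a)) + β * cosh (μ * (b - a))), ?_⟩
  rw [neumannSol, neumannSolDeriv]
  field_simp
  ring

end NeumannSolution

/-- Range condition for the operator on an interval with an isolated external
state (case α = 0): the equation at the isolated point gives `c/λ`, and the
transmission condition at `0−` becomes a Robin boundary condition coupled to it. -/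
theorem range_condition_isolated_state
    (a κ β lam c : ℝ) (ha : a < 0) (hκ : 0 < κ) (hβ : 0 ≤ β) (hlam : 0 < lam)
    (g : ℝ → ℝ) (hg : ContinuousOn g (Icc a 0)) :
    ∃ f : ℝ → ℝ,
      ContDiffOn ℝ 2 f (Icc a 0) ∧
      (∀ x ∈ Icc a 0, lam * f x - κ * d2Icc a 0 f x = g x) ∧
      dIcc a 0 f a = 0 ∧
      dIcc a 0 f 0 = β * (c / lam - f 0) := by
  obtain ⟨G, hG, hGg⟩ : ∃ G, Continuous G ∧ EqOn G g (Icc a 0) :=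
    ⟨IccExtend ha.le ((Icc a 0).domRestrict g), continuous_IccExtend_iff.2 hg.domRestrict,
      fun x hx => IccExtend_of_mem ha.le _ hx⟩
  set μ := √(lam / κ)
  have hμ : 0 < μ := sqrt_pos.2 (div_pos hlam hκ)
  have hκμ : κ * μ ^ 2 = lam := by
    rw [sq_sqrt (div_pos hlam hκ).le]
    field_simp
  obtain ⟨A, hA⟩ := exists_neumannSol_robin κ a hμ ha hβ (c / lam) (G := G)
  have hf := hasDerivAt_neumannSol κ a A hμ.ne' hG
  have hf' := hasDerivAt_neumannSolDeriv κ a A hμ.ne' hG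
  have hsol : Continuous (neumannSol κ μ a A G) :=
    continuous_iff_continuousAt.2 fun x => (hf x).continuousAt
  have hf'' : Continuous fun x => μ ^ 2 * neumannSol κ μ a A G x - G x / κ := by fun_prop
  refine ⟨neumannSol κ μ a A G, (contDiff_two_of_hasDerivAt hf hf' hf'').contDiffOn,
    fun x hx => ?_, ?_, ?_⟩
  · rw [d2Icc_eq_of_hasDerivAt ha hf hf' hx, ← hGg hx]
    field_simp
    linear_combination -neumannSol κ μ a A G x * hκμ
  · rw [dIcc_eq_of_hasDerivAt ha hf (left_mem_Icc.2 ha.le), neumannSolDeriv_left]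
  · rwa [dIcc_eq_of_hasDerivAt ha hf (right_mem_Icc.2 ha.le)]
end
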